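/- arXiv:2111.00047 — 2 statements merged into one kernel-verified Lean document; each statement's English description precedes it below -/
import Mathlib

section
/- As ε → 0⁺, the minimizers P^ε of the entropy-regularized discrete optimal transport problem converge (along a subsequence, and entirely if the unregularized problem has a unique solution) to a minimizer of the unregularized linear program; moreover any limit point is the maximal-entropy optimal plan among unregularized optima. -/
open Finset Filter Topology

/-- The transportation polytope with uniform marginals `1/N`. -/
def transportPolytope (N : ℕ) : Set (Matrix (Fin N) (Fin N) ℝ) :=
  {P | (∀ i j, 0 ≤ P i j) ∧
    (∀ i, ∑ j, P i j = 1 / (N : ℝ)) ∧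
    (∀ j, ∑ i, P i j = 1 / (N : ℝ))}

/-- Entropy of a nonnegative matrix (with `0 log 0 = 0`, as `Real.log 0 = 0`). -/
noncomputable def matrixEntropy {N : ℕ} (P : Matrix (Fin N) (Fin N) ℝ) : ℝ :=
  -∑ i, ∑ j, P i j * Real.log (P i j)

/-!
As `ε → 0⁺` the regularized objective `f - ε H` converges to the linear cost `f`, so every
cluster point of `P^ε` minimizes `f`. If `Q` is an unregularized optimum, the two optimality
conditions give `f Q ≤ f P^ε ≤ f Q - ε (H Q - H P^ε)`, hence `H Q ≤ H P^ε` for every `ε > 0`,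
and this passes to the limit. By compactness, a family with a unique possible cluster point
converges to it.
-/

section Regularization

variable {X : Type*} {K : Set X} {f H : X → ℝ}

theorem le_of_isMinOn_sub_mul_of_isMinOn {ε : ℝ} (hε : 0 < ε) {x y : X} (hx : x ∈ K)
    (hy : y ∈ K) (hxmin : IsMinOn (fun z => f z - ε * H z) K x) (hymin : IsMinOn f K y) :
    H y ≤ H x := by
  have hreg := isMinOn_iff.1 hxmin y hy
  have hlin := isMinOn_iff.1 hymin x hx
  nlinarith

variable [TopologicalSpace X] {P : ℝ → X}

theorem isMinOn_of_mapClusterPt_nhdsGT (hf : Continuous f) (hH : Continuous H)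
    (hP : ∀ ε, 0 < ε → IsMinOn (fun z => f z - ε * H z) K (P ε)) {x : X}
    (hx : MapClusterPt x (𝓝[>] 0) P) : IsMinOn f K x := by
  obtain ⟨U, hU, hPU⟩ := mapClusterPt_iff_ultrafilter.1 hx
  have hεU : Tendsto (fun ε : ℝ => ε) U (𝓝 0) := hU.trans nhdsWithin_le_nhds
  have hposU : ∀ᶠ ε in (U : Filter ℝ), 0 < ε := hU self_mem_nhdsWithin
  intro y hy
  have hlimP : Tendsto (fun ε => f (P ε) - ε * H (P ε)) U (𝓝 (f x)) := by
    simpa using ((hf.tendsto x).comp hPU).sub (hεU.mul ((hH.tendsto x).comp hPU))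
  have hlimy : Tendsto (fun ε => f y - ε * H y) U (𝓝 (f y)) := by
    simpa using tendsto_const_nhds.sub (hεU.mul_const (H y))
  exact le_of_tendsto_of_tendsto hlimP hlimy
    (hposU.mono fun ε hε => isMinOn_iff.1 (hP ε hε) y hy)

theorem le_of_mapClusterPt_nhdsGT (hH : Continuous H) (hPK : ∀ ε, 0 < ε → P ε ∈ K)
    (hP : ∀ ε, 0 < ε → IsMinOn (fun z => f z - ε * H z) K (P ε)) {x : X}
    (hx : MapClusterPt x (𝓝[>] 0) P) {y : X} (hy : y ∈ K) (hymin : IsMinOn f K y) :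
    H y ≤ H x :=
  (isClosed_le continuous_const hH).mem_of_mapClusterPt hx <|
    eventually_nhdsWithin_of_forall fun ε (hε : 0 < ε) =>
      le_of_isMinOn_sub_mul_of_isMinOn hε (hPK ε hε) hy (hP ε hε) hymin

end Regularization

section TransportPolytope

variable {N : ℕ}

instance : FirstCountableTopology (Matrix (Fin N) (Fin N) ℝ) :=
  inferInstanceAs (FirstCountableTopology (Fin N → Fin N → ℝ))

theorem continuous_matrixEntropy : Continuous (matrixEntropy (N := N)) := by
  unfold matrixEntropy
  fun_prop

theorem isClosed_transportPolytope : IsClosed (transportPolytope N) := by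
  simp only [transportPolytope, Set.ofPred_and, Set.ofPred_forall]
  refine .inter (isClosed_iInter fun i => isClosed_iInter fun j =>
    isClosed_le continuous_const (by fun_prop)) (.inter ?_ ?_) <;>
  exact isClosed_iInter fun _ => isClosed_eq (by fun_prop) continuous_const

theorem transportPolytope_subset_pi_Icc :
    transportPolytope N ⊆ Set.univ.pi fun _ => Set.univ.pi fun _ => Set.Icc 0 (1 / (N : ℝ)) := by
  rintro P ⟨hnonneg, hrow, -⟩ i - j -
  refine ⟨hnonneg i j, ?_⟩
  calc P i j ≤ ∑ k, P i k := single_le_sum (fun k _ => hnonneg i k) (mem_univ j)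
    _ = 1 / N := hrow i

theorem isCompact_transportPolytope : IsCompact (transportPolytope N) :=
  (isCompact_univ_pi fun _ => isCompact_univ_pi fun _ => isCompact_Icc).of_isClosed_subset
    isClosed_transportPolytope transportPolytope_subset_pi_Icc

end TransportPolytope

theorem entropic_plans_converge_general (N : ℕ)
    (C : Matrix (Fin N) (Fin N) ℝ)
    (Pe : ℝ → Matrix (Fin N) (Fin N) ℝ)
    (hPe : ∀ ε : ℝ, 0 < ε → Pe ε ∈ transportPolytope N ∧
      IsMinOn (fun Q => ∑ i, ∑ j, C i j * Q i j - ε * matrixEntropy Q)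
        (transportPolytope N) (Pe ε)) :
    (∀ e : ℕ → ℝ, (∀ k, 0 < e k) → Tendsto e atTop (𝓝 0) →
      ∃ φ : ℕ → ℕ, StrictMono φ ∧ ∃ Pstar : Matrix (Fin N) (Fin N) ℝ,
        Tendsto (fun k => Pe (e (φ k))) atTop (𝓝 Pstar) ∧
        Pstar ∈ transportPolytope N ∧
        IsMinOn (fun Q => ∑ i, ∑ j, C i j * Q i j) (transportPolytope N) Pstar ∧
        (∀ Q ∈ transportPolytope N,
          IsMinOn (fun Q => ∑ i, ∑ j, C i j * Q i j) (transportPolytope N) Q →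
          matrixEntropy Q ≤ matrixEntropy Pstar)) ∧
    (∀ P0 : Matrix (Fin N) (Fin N) ℝ, P0 ∈ transportPolytope N →
      IsMinOn (fun Q => ∑ i, ∑ j, C i j * Q i j) (transportPolytope N) P0 →
      (∀ Q ∈ transportPolytope N,
        IsMinOn (fun Q => ∑ i, ∑ j, C i j * Q i j) (transportPolytope N) Q → Q = P0) →
      Tendsto Pe (𝓝[>] (0:ℝ)) (𝓝 P0)) := by
  have hcost : Continuous fun Q : Matrix (Fin N) (Fin N) ℝ => ∑ i, ∑ j, C i j * Q i j := by
    fun_prop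
  have hPK := fun ε hε => (hPe ε hε).1
  have hPmin := fun ε hε => (hPe ε hε).2
  refine ⟨fun e he hlim => ?_, fun P0 _ _ huniq => ?_⟩
  · obtain ⟨Pstar, hPstar, φ, hφ, hconv⟩ :=
      isCompact_transportPolytope.tendsto_subseq fun k => hPK (e k) (he k)
    have heφ : Tendsto (e ∘ φ) atTop (𝓝[>] 0) :=
      tendsto_nhdsWithin_iff.2 ⟨hlim.comp hφ.tendsto_atTop, .of_forall fun k => he (φ k)⟩
    have hcluster : MapClusterPt Pstar (𝓝[>] 0) Pe := hconv.mapClusterPt.of_comp heφ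
    exact ⟨φ, hφ, Pstar, hconv, hPstar,
      isMinOn_of_mapClusterPt_nhdsGT hcost continuous_matrixEntropy hPmin hcluster,
      fun Q => le_of_mapClusterPt_nhdsGT continuous_matrixEntropy hPK hPmin hcluster⟩
  · exact isCompact_transportPolytope.tendsto_nhds_of_unique_mapClusterPt
      (eventually_nhdsWithin_of_forall hPK) fun P hP hcluster =>
        huniq P hP (isMinOn_of_mapClusterPt_nhdsGT hcost continuous_matrixEntropy hPmin hcluster)

/-- As `ε → 0⁺`, the entropic minimizers `P^ε` converge along a subsequence to a
minimizer of the unregularized linear program; any limit point is the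
maximal-entropy optimal plan among unregularized optima; and if the unregularized
problem has a unique solution then the whole family converges to it. -/
theorem entropic_plans_converge (N : ℕ) (hN : 0 < N)
    (C : Matrix (Fin N) (Fin N) ℝ)
    (Pe : ℝ → Matrix (Fin N) (Fin N) ℝ)
    (hPe : ∀ ε : ℝ, 0 < ε → Pe ε ∈ transportPolytope N ∧
      IsMinOn (fun Q => ∑ i, ∑ j, C i j * Q i j - ε * matrixEntropy Q)
        (transportPolytope N) (Pe ε)) :
    (∀ e : ℕ → ℝ, (∀ k, 0 < e k) → Tendsto e atTop (𝓝 0) →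
      ∃ φ : ℕ → ℕ, StrictMono φ ∧ ∃ Pstar : Matrix (Fin N) (Fin N) ℝ,
        Tendsto (fun k => Pe (e (φ k))) atTop (𝓝 Pstar) ∧
        Pstar ∈ transportPolytope N ∧
        IsMinOn (fun Q => ∑ i, ∑ j, C i j * Q i j) (transportPolytope N) Pstar ∧
        (∀ Q ∈ transportPolytope N,
          IsMinOn (fun Q => ∑ i, ∑ j, C i j * Q i j) (transportPolytope N) Q →
          matrixEntropy Q ≤ matrixEntropy Pstar)) ∧
    (∀ P0 : Matrix (Fin N) (Fin N) ℝ, P0 ∈ transportPolytope N →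
      IsMinOn (fun Q => ∑ i, ∑ j, C i j * Q i j) (transportPolytope N) P0 →
      (∀ Q ∈ transportPolytope N,
        IsMinOn (fun Q => ∑ i, ∑ j, C i j * Q i j) (transportPolytope N) Q → Q = P0) →
      Tendsto Pe (𝓝[>] (0:ℝ)) (𝓝 P0)) :=
  entropic_plans_converge_general N C Pe hPe
end

section
/- The energy statistic V(a, b) = (2/mn)Σ_{i,j}‖a_i − b_j‖ − (1/m²)Σ_{i,j}‖a_i − a_j‖ − (1/n²)Σ_{i,j}‖b_i − b_j‖ is nonnegative for any finite collections a_1,…,a_m and b_1,…,b_n of points in ℝ^d. -/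
open Finset

/-- The two-sample energy statistic. -/
noncomputable def energyStat {d m n : ℕ} (a : Fin m → EuclideanSpace ℝ (Fin d))
    (b : Fin n → EuclideanSpace ℝ (Fin d)) : ℝ :=
  (2 / ((m : ℝ) * n)) * ∑ i, ∑ j, ‖a i - b j‖
    - (1 / (m : ℝ) ^ 2) * ∑ i, ∑ j, ‖a i - a j‖
    - (1 / (n : ℝ) ^ 2) * ∑ i, ∑ j, ‖b i - b j‖

/-!
With `C = ∫₀^∞ (1 - exp (-s)) s^(-3/2) ds > 0`, scaling gives
`C ‖x‖ = ∫₀^∞ (1 - exp (-s ‖x‖²)) s^(-3/2) ds`. Hence, for weights with `∑ cᵢ = 0`,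
`C ∑ cᵢ cⱼ ‖xᵢ - xⱼ‖ = -∫₀^∞ s^(-3/2) ∑ cᵢ cⱼ exp (-s ‖xᵢ - xⱼ‖²) ds ≤ 0`, because the Gaussian
kernel is positive semidefinite: it is a rank-one matrix times the entrywise exponential of a
Gram matrix, and entrywise powers, hence entrywise exponentials, of a positive semidefinite
matrix are positive semidefinite by the Schur product theorem. The energy statistic is minus
such a sum, with weights `1/m` on the `aᵢ` and `-1/n` on the `bⱼ`.
-/

open Matrix
open scoped Nat

namespace Matrix

variable {ι : Type*} [Fintype ι]

theorem dotProduct_mulVec_self_eq_sum_sum (M : Matrix ι ι ℝ) (c : ι → ℝ) :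
    c ⬝ᵥ (M *ᵥ c) = ∑ i, ∑ j, c i * c j * M i j := by
  simp only [dotProduct, mulVec, mul_sum]
  exact sum_congr rfl fun i _ => sum_congr rfl fun j _ => by ring

theorem PosSemidef.sum_sum_mul_nonneg {M : Matrix ι ι ℝ} (hM : M.PosSemidef) (c : ι → ℝ) :
    0 ≤ ∑ i, ∑ j, c i * c j * M i j := by
  simpa [dotProduct_mulVec_self_eq_sum_sum] using hM.dotProduct_mulVec_nonneg c

theorem PosSemidef.map_pow {A : Matrix ι ι ℝ} (hA : A.PosSemidef) (k : ℕ) :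
    (A.map (· ^ k)).PosSemidef := by
  induction k with
  | zero =>
    convert posSemidef_vecMulVec_self_star (1 : ι → ℝ) using 1
    ext; simp [vecMulVec]
  | succ k ih =>
    rw [show A.map (· ^ (k + 1)) = A.map (· ^ k) ⊙ A by ext; simp [pow_succ]]
    exact ih.hadamard hA

theorem PosSemidef.map_exp {A : Matrix ι ι ℝ} (hA : A.PosSemidef) :
    (A.map Real.exp).PosSemidef := by
  refine posSemidef_iff_dotProduct_mulVec.mpr ⟨hA.isHermitian.map _ fun _ => rfl, fun c => ?_⟩
  rw [star_trivial, dotProduct_mulVec_self_eq_sum_sum]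
  have hsum : HasSum (fun k : ℕ => ∑ i, ∑ j, c i * c j * ((k ! : ℝ)⁻¹ • A.map (· ^ k)) i j)
      (∑ i, ∑ j, c i * c j * A.map Real.exp i j) := by
    refine hasSum_sum fun i _ => hasSum_sum fun j _ => ?_
    simpa [Real.exp_eq_exp_ℝ] using
      (NormedSpace.exp_series_hasSum_exp' (𝕂 := ℝ) (A i j)).mul_left (c i * c j)
  exact hsum.nonneg fun k =>
    ((hA.map_pow k).smul (a := (k ! : ℝ)⁻¹) (by positivity)).sum_sum_mul_nonneg c

theorem posSemidef_exp_neg_mul_norm_sub_sq {E : Type*} [NormedAddCommGroup E]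
    [InnerProductSpace ℝ E] (x : ι → E) {s : ℝ} (hs : 0 ≤ s) :
    (of fun i j => Real.exp (-(s * ‖x i - x j‖ ^ 2))).PosSemidef := by
  set u : ι → ℝ := fun i => Real.exp (-(s * ‖x i‖ ^ 2))
  have hsplit : of (fun i j => Real.exp (-(s * ‖x i - x j‖ ^ 2)))
      = vecMulVec u (star u) ⊙ ((2 * s) • gram ℝ x).map Real.exp := by
    ext i j
    simp only [of_apply, hadamard_apply, vecMulVec_apply, star_trivial, map_apply, smul_apply,
      gram_apply, smul_eq_mul, u, ← Real.exp_add, norm_sub_sq_real]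
    ring_nf
  rw [hsplit]
  exact (posSemidef_vecMulVec_self_star u).hadamard
    (((posSemidef_gram ℝ x).smul (a := 2 * s) (by positivity)).map_exp)

end Matrix

section

open MeasureTheory Set Real

theorem integrableOn_one_sub_exp_neg_mul_sq_mul_rpow (r : ℝ) :
    IntegrableOn (fun s : ℝ => (1 - exp (-(s * r ^ 2))) * s ^ (-(3 : ℝ) / 2)) (Ioi 0) := by
  have hmeas : AEStronglyMeasurable
      (fun s : ℝ => (1 - exp (-(s * r ^ 2))) * s ^ (-(3 : ℝ) / 2)) := by
    fun_prop
  have hnorm : ∀ s ∈ Ioi (0 : ℝ), ‖(1 - exp (-(s * r ^ 2))) * s ^ (-(3 : ℝ) / 2)‖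
      = (1 - exp (-(s * r ^ 2))) * s ^ (-(3 : ℝ) / 2) := fun s (hs : 0 < s) =>
    norm_of_nonneg <| mul_nonneg
      (sub_nonneg.mpr <| exp_le_one_iff.mpr <| neg_nonpos.mpr <| by positivity) (by positivity)
  rw [← Ioc_union_Ioi_eq_Ioi zero_le_one]
  refine IntegrableOn.union ?_ ?_
  · have hdom : IntegrableOn (fun s : ℝ => r ^ 2 * s ^ (-(1 : ℝ) / 2)) (Ioc 0 1) := by
      refine Integrable.const_mul ?_ _
      exact (intervalIntegrable_iff_integrableOn_Ioc_of_le zero_le_one).mp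
        (intervalIntegral.intervalIntegrable_rpow' (by norm_num))
    refine hdom.mono' hmeas.restrict <| (ae_restrict_iff' measurableSet_Ioc).mpr <|
      .of_forall fun s hs => ?_
    have hs0 : 0 < s := hs.1
    rw [hnorm s hs0]
    calc (1 - exp (-(s * r ^ 2))) * s ^ (-(3 : ℝ) / 2)
        ≤ s * r ^ 2 * s ^ (-(3 : ℝ) / 2) := by
          gcongr
          linarith [one_sub_le_exp_neg (s * r ^ 2)]
      _ = r ^ 2 * s ^ (-(1 : ℝ) / 2) := by
          rw [mul_comm s, mul_assoc, ← rpow_one_add' hs0.le (by norm_num)]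
          norm_num
  · refine (integrableOn_Ioi_rpow_of_lt (a := -(3 : ℝ) / 2) (by norm_num) one_pos).mono'
      hmeas.restrict <| (ae_restrict_iff' measurableSet_Ioi).mpr <| .of_forall fun s hs => ?_
    have hs0 : 0 < s := zero_lt_one.trans hs
    rw [hnorm s hs0]
    exact mul_le_of_le_one_left (by positivity) (by linarith [exp_pos (-(s * r ^ 2))])

-- Its value is `2 * √π`.
noncomputable def normIntegralConst : ℝ :=
  ∫ s in Ioi 0, (1 - exp (-s)) * s ^ (-(3 : ℝ) / 2)

theorem normIntegralConst_pos : 0 < normIntegralConst := by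
  have hpos : ∀ s ∈ Ioi (0 : ℝ), 0 < (1 - exp (-s)) * s ^ (-(3 : ℝ) / 2) := fun s (hs : 0 < s) =>
    mul_pos (sub_pos.mpr (exp_lt_one_iff.mpr (neg_lt_zero.mpr hs))) (rpow_pos_of_pos hs _)
  have hint : IntegrableOn (fun s : ℝ => (1 - exp (-s)) * s ^ (-(3 : ℝ) / 2)) (Ioi 0) := by
    simpa using integrableOn_one_sub_exp_neg_mul_sq_mul_rpow 1
  rw [normIntegralConst, setIntegral_pos_iff_support_of_nonneg_ae
    ((ae_restrict_iff' measurableSet_Ioi).mpr (.of_forall fun s hs => (hpos s hs).le)) hint]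
  calc (0 : ENNReal) < volume (Ioi (0 : ℝ)) := by simp
    _ ≤ _ := measure_mono fun s hs => by exact ⟨(hpos s hs).ne', hs⟩

theorem integral_one_sub_exp_neg_mul_sq_mul_rpow {r : ℝ} (hr : 0 ≤ r) :
    ∫ s in Ioi 0, (1 - exp (-(s * r ^ 2))) * s ^ (-(3 : ℝ) / 2) = normIntegralConst * r := by
  obtain rfl | hr := hr.eq_or_lt
  · simp
  have hscale : ∀ s ∈ Ioi (0 : ℝ), (1 - exp (-(s * r ^ 2))) * s ^ (-(3 : ℝ) / 2)
      = r ^ 3 * ((1 - exp (-(r ^ 2 * s))) * (r ^ 2 * s) ^ (-(3 : ℝ) / 2)) :=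
    fun s (hs : 0 < s) => by
    have hr3 : (r ^ 2) ^ (-(3 : ℝ) / 2) = (r ^ 3)⁻¹ := by
      rw [← rpow_natCast, ← rpow_mul hr.le, ← rpow_natCast, ← rpow_neg hr.le]
      norm_num
    rw [mul_rpow (by positivity) hs.le, hr3, mul_comm s]
    field_simp
  rw [setIntegral_congr_fun measurableSet_Ioi hscale, integral_const_mul,
    integral_comp_mul_left_Ioi (fun u => (1 - exp (-u)) * u ^ (-(3 : ℝ) / 2)) 0 (by positivity),
    mul_zero, smul_eq_mul, ← normIntegralConst]
  field_simp

theorem sum_sum_mul_norm_sub_nonpos {ι E : Type*} [Fintype ι] [NormedAddCommGroup E]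
    [InnerProductSpace ℝ E] (x : ι → E) {c : ι → ℝ} (hc : ∑ i, c i = 0) :
    ∑ i, ∑ j, c i * c j * ‖x i - x j‖ ≤ 0 := by
  refine nonpos_of_mul_nonpos_right ?_ normIntegralConst_pos
  let g (r s : ℝ) : ℝ := (1 - exp (-(s * r ^ 2))) * s ^ (-(3 : ℝ) / 2)
  have hint (i j : ι) : IntegrableOn (fun s => c i * c j * g ‖x i - x j‖ s) (Ioi 0) :=
    (integrableOn_one_sub_exp_neg_mul_sq_mul_rpow _).const_mul _
  have hrepr : normIntegralConst * ∑ i, ∑ j, c i * c j * ‖x i - x j‖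
      = ∫ s in Ioi 0, ∑ i, ∑ j, c i * c j * g ‖x i - x j‖ s := by
    rw [integral_finsetSum _ fun i _ => integrable_finsetSum _ fun j _ => hint i j, mul_sum]
    refine sum_congr rfl fun i _ => ?_
    rw [integral_finsetSum _ fun j _ => hint i j, mul_sum]
    refine sum_congr rfl fun j _ => ?_
    rw [integral_const_mul, integral_one_sub_exp_neg_mul_sq_mul_rpow (norm_nonneg _)]
    ring
  have hpointwise (s : ℝ) : ∑ i, ∑ j, c i * c j * g ‖x i - x j‖ s
      = -(s ^ (-(3 : ℝ) / 2) * ∑ i, ∑ j, c i * c j * exp (-(s * ‖x i - x j‖ ^ 2))) := by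
    have hcc : ∑ i, ∑ j, c i * c j = 0 := by rw [← sum_mul_sum, hc, zero_mul]
    calc ∑ i, ∑ j, c i * c j * g ‖x i - x j‖ s
        = ∑ i, ∑ j, (c i * c j * s ^ (-(3 : ℝ) / 2)
            - s ^ (-(3 : ℝ) / 2) * (c i * c j * exp (-(s * ‖x i - x j‖ ^ 2)))) :=
          sum_congr rfl fun i _ => sum_congr rfl fun j _ => by ring
      _ = (∑ i, ∑ j, c i * c j) * s ^ (-(3 : ℝ) / 2)
            - s ^ (-(3 : ℝ) / 2) * ∑ i, ∑ j, c i * c j * exp (-(s * ‖x i - x j‖ ^ 2)) := by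
          simp only [sum_sub_distrib, sum_mul, mul_sum]
      _ = _ := by rw [hcc]; ring
  rw [hrepr]
  refine setIntegral_nonpos measurableSet_Ioi fun s (hs : 0 < s) => ?_
  rw [hpointwise, neg_nonpos]
  exact mul_nonneg (rpow_pos_of_pos hs _).le
    ((posSemidef_exp_neg_mul_norm_sub_sq x hs.le).sum_sum_mul_nonneg c)

end

noncomputable def energyWeights (m n : ℕ) : Fin m ⊕ Fin n → ℝ :=
  Sum.elim (fun _ => (m : ℝ)⁻¹) (fun _ => -(n : ℝ)⁻¹)

theorem sum_energyWeights {m n : ℕ} (hm : 0 < m) (hn : 0 < n) :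
    ∑ i, energyWeights m n i = 0 := by
  simp [energyWeights, Fintype.sum_sum_type, hm.ne', hn.ne']

theorem energyStat_eq_neg_sum_sum {d m n : ℕ} (a : Fin m → EuclideanSpace ℝ (Fin d))
    (b : Fin n → EuclideanSpace ℝ (Fin d)) :
    energyStat a b = -∑ i, ∑ j, energyWeights m n i * energyWeights m n j
      * ‖Sum.elim a b i - Sum.elim a b j‖ := by
  have hswap : ∑ j, ∑ i, ‖b j - a i‖ = ∑ i, ∑ j, ‖a i - b j‖ := by
    rw [sum_comm]
    simp only [norm_sub_rev]
  simp only [energyStat, energyWeights, Fintype.sum_sum_type, Sum.elim_inl, Sum.elim_inr,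
    ← mul_sum, sum_add_distrib, hswap]
  ring

/-- The energy statistic is nonnegative. -/
theorem energyStat_nonneg (d m n : ℕ) (hm : 0 < m) (hn : 0 < n)
    (a : Fin m → EuclideanSpace ℝ (Fin d)) (b : Fin n → EuclideanSpace ℝ (Fin d)) :
    0 ≤ energyStat a b := by
  rw [energyStat_eq_neg_sum_sum, neg_nonneg]
  exact sum_sum_mul_norm_sub_nonpos _ (sum_energyWeights hm hn)
end
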